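/- If P is symmetric positive definite and the matrix G (formed by stacking the rows of A and C_J) has full row rank, then the KKT matrix K = [[P, Gᵀ],[G, 0]] is invertible. -/

import Mathlib

/-!
Since `P` is invertible, the KKT matrix is invertible iff its Schur complement `0 - G P⁻¹ Gᵀ` is.
That complement is negative definite: `P⁻¹` is positive definite and full row rank makes
`x ↦ xᵀ G` injective, so `xᵀ (G P⁻¹ Gᵀ) x = (xᵀ G) P⁻¹ (xᵀ G)ᵀ > 0` for `x ≠ 0`.
-/

namespace Matrix

variable {m n K : Type*} [Fintype m] [Fintype n]

theorem linearIndependent_row_iff_rank_eq_card [Field K] {M : Matrix m n K} :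
    LinearIndependent K M.row ↔ M.rank = Fintype.card m := by
  rw [linearIndependent_iff_card_eq_finrank_span, rank_eq_finrank_span_row, Set.finrank, eq_comm]

theorem PosDef.isUnit_fromBlocks_conjTranspose_zero [DecidableEq m] [DecidableEq n]
    [Field K] [PartialOrder K] [StarRing K]
    {A : Matrix m m K} {B : Matrix n m K} (hA : A.PosDef) (hB : LinearIndependent K B.row) :
    IsUnit (fromBlocks A Bᴴ B 0) := by
  let := hA.isUnit.invertible
  rw [isUnit_fromBlocks_iff_of_invertible₁₁, zero_sub, IsUnit.neg_iff, invOf_eq_nonsing_inv]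
  exact (hA.inv.mul_mul_conjTranspose_same (vecMul_injective_iff.mpr hB)).isUnit

end Matrix

theorem stmt3 (n k : ℕ) (P : Matrix (Fin n) (Fin n) ℝ) (hP : P.PosDef)
    (G : Matrix (Fin k) (Fin n) ℝ) (hG : G.rank = k) :
    IsUnit (Matrix.fromBlocks P G.transpose G (0 : Matrix (Fin k) (Fin k) ℝ)) := by
  have hrows : LinearIndependent ℝ G.row := by
    rwa [Matrix.linearIndependent_row_iff_rank_eq_card, Fintype.card_fin]
  simpa only [Matrix.conjTranspose_eq_transpose_of_trivial] using
    hP.isUnit_fromBlocks_conjTranspose_zero hrows
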